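/- arXiv:2601.17626 — 2 statements merged into one kernel-verified Lean document; each statement's English description precedes it below -/
import Mathlib

section
/- Let k ≥ 0, n = k+1, and a, b ∈ ℂ^n. Then det([(a_r + b_s)^k]_{r,s=1}^n) = (-1)^{C(k+1,2)} · (Π_{i=0}^k C(k,i)) · Π_{1≤i<j≤n}(a_j - a_i) · Π_{1≤i<j≤n}(b_j - b_i). -/
/-!
Expanding binomially, `(a r + b s) ^ k = ∑ i, a r ^ i * C(k, i) * b s ^ (k - i)`, so the matrix
factors as `V(a) * diag(C(k, i)) * W(b)ᵀ` with `V` the Vandermonde matrix and `W(b)` the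
reversed one, `W(b) s i = b s ^ (k - i)`. As a projective Vandermonde matrix, `W(b)` has
determinant `∏_{i<j} (b i - b j)`: the `C(k + 1, 2)` factors of `det V(b)`, each negated.
-/

open Finset Matrix

theorem Finset.prod_Ioi_eq_prod_ite {ι M : Type*} [Fintype ι] [LinearOrder ι]
    [LocallyFiniteOrderTop ι] [CommMonoid M] (f : ι → ι → M) :
    ∏ i, ∏ j ∈ Ioi i, f i j = ∏ i, ∏ j, if i < j then f i j else 1 := by
  simp_rw [← filter_lt_eq_Ioi, prod_filter]

theorem Fin.sum_card_Ioi (n : ℕ) : ∑ i : Fin n, #(Ioi i) = n.choose 2 := by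
  simp only [Fin.card_Ioi]
  rw [Fin.sum_univ_eq_sum_range (fun i => n - 1 - i), Finset.sum_range_reflect (fun i => i),
    Finset.sum_range_id, Nat.choose_two_right]

theorem Fin.prod_prod_Ioi_sub_swap {R : Type*} [CommRing R] {n : ℕ} (v : Fin n → R) :
    ∏ i, ∏ j ∈ Ioi i, (v i - v j) = (-1) ^ n.choose 2 * ∏ i, ∏ j ∈ Ioi i, (v j - v i) := by
  calc ∏ i, ∏ j ∈ Ioi i, (v i - v j) = ∏ i, ∏ j ∈ Ioi i, -(v j - v i) := by simp only [neg_sub]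
    _ = _ := by simp only [prod_neg, prod_mul_distrib, prod_pow_eq_pow_sum, Fin.sum_card_Ioi]

namespace Matrix

variable {R : Type*} [CommRing R]

theorem det_projVandermonde_one_left {n : ℕ} (v : Fin n → R) :
    (projVandermonde 1 v).det = (-1) ^ n.choose 2 * (vandermonde v).det := by
  simp only [det_projVandermonde, det_vandermonde, Pi.one_apply, one_mul,
    Fin.prod_prod_Ioi_sub_swap]

theorem of_add_pow_eq_vandermonde_mul {k : ℕ} (a b : Fin (k + 1) → R) :
    of (fun r s => (a r + b s) ^ k) =
      vandermonde a * diagonal (fun i : Fin (k + 1) => (k.choose i : R)) *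
        (projVandermonde 1 b)ᵀ := by
  ext r s
  simp only [of_apply, mul_apply, vandermonde_apply, diagonal_apply, transpose_apply,
    projVandermonde_apply, Pi.one_apply, one_pow, one_mul, Fin.val_rev, mul_ite, mul_zero,
    sum_ite_eq', mem_univ, if_true]
  rw [add_pow, ← Fin.sum_univ_eq_sum_range (fun i => a r ^ i * b s ^ (k - i) * (k.choose i : R))]
  refine sum_congr rfl fun i _ => ?_
  rw [Nat.add_sub_add_right]
  ring

theorem det_of_add_pow {k : ℕ} (a b : Fin (k + 1) → R) :
    (of fun r s => (a r + b s) ^ k).det =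
      (-1) ^ (k + 1).choose 2 * (∏ i ∈ range (k + 1), (k.choose i : R)) *
        (vandermonde a).det * (vandermonde b).det := by
  rw [of_add_pow_eq_vandermonde_mul, det_mul, det_mul, det_transpose, det_diagonal,
    det_projVandermonde_one_left, Fin.prod_univ_eq_prod_range (fun i => (k.choose i : R))]
  ring

end Matrix

theorem stmt_5 (k : ℕ) (a b : Fin (k + 1) → ℂ) :
    Matrix.det (Matrix.of fun r s : Fin (k + 1) => (a r + b s) ^ k) =
      (-1 : ℂ) ^ ((k + 1).choose 2) * (∏ i ∈ Finset.range (k + 1), (k.choose i : ℂ)) *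
        (∏ i : Fin (k + 1), ∏ j : Fin (k + 1), if i < j then a j - a i else 1) *
        (∏ i : Fin (k + 1), ∏ j : Fin (k + 1), if i < j then b j - b i else 1) := by
  rw [det_of_add_pow, det_vandermonde, det_vandermonde, prod_Ioi_eq_prod_ite, prod_Ioi_eq_prod_ite]
end

section
/- Let n = k+1 and let C_f be the n×n matrix with entries (C_f)_{i+1,j+1} = α_{i+j}·C(i+j, i) for 0 ≤ i, j ≤ n-1, where f(t) = Σ_{i=0}^k α_i t^i with α_k ≠ 0 (and α_m interpreted as 0 for m > k). Then det(C_f) = α_k^n · (-1)^{C(n,2)} · Π_{i=0}^k C(k,i). -/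
/-!
The entries `α (i + j)` vanish strictly below the antidiagonal `i + j = k`, so reversing the order
of the columns gives an upper triangular matrix with diagonal entries `α k * k.choose i`; the
reversal permutation has sign `(-1) ^ (n.choose 2)`.
-/

open Equiv Equiv.Perm

lemma Fin.revPerm_succ (n : ℕ) :
    (Fin.revPerm : Perm (Fin (n + 1))) =
      (finRotate (n + 1)).symm * decomposeFin.symm (0, Fin.revPerm) := by
  ext x
  refine Fin.cases ?_ (fun i => ?_) x
  · simp
  · simp [Fin.coe_sub_one, Fin.val_rev]

lemma Fin.sign_revPerm (n : ℕ) :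
    sign (Fin.revPerm : Perm (Fin n)) = (-1) ^ n.choose 2 := by
  induction n with
  | zero => rfl
  | succ n ih =>
    rw [Fin.revPerm_succ, Perm.sign_mul, sign_symm, sign_finRotate, decomposeFin.symm_sign,
      if_pos rfl, one_mul, ih, Nat.add_sub_cancel, ← pow_add, Nat.choose_succ_succ',
      Nat.choose_one_right]

theorem Matrix.det_eq_prod_antidiagonal_of_zero_below {R : Type*} [CommRing R] {n : ℕ}
    (A : Matrix (Fin n) (Fin n) R) (hA : ∀ i j : Fin n, n ≤ (i : ℕ) + j → A i j = 0) :
    A.det = (-1) ^ n.choose 2 * ∏ i, A i i.rev := by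
  have hU : (A.submatrix id Fin.revPerm).IsUpperTriangular := fun i j hji =>
    hA _ _ (by
      simp only [id, Fin.revPerm_apply, Fin.val_rev]; have : (j : ℕ) < i := hji; omega)
  calc A.det = ((A.submatrix id Fin.revPerm).submatrix id Fin.revPerm).det := by
        congr 1; ext; simp
    _ = sign (Fin.revPerm : Perm (Fin n)) * ∏ i, A i i.rev := by
      rw [det_permute', det_of_isUpperTriangular hU]; rfl
    _ = (-1) ^ n.choose 2 * ∏ i, A i i.rev := by rw [Fin.sign_revPerm]; push_cast; rfl

theorem stmt_15_general (k : ℕ) (α : ℕ → ℂ) (hα : ∀ m, k < m → α m = 0) :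
    Matrix.det (Matrix.of fun i j : Fin (k + 1) =>
        α ((i : ℕ) + (j : ℕ)) * (((i : ℕ) + (j : ℕ)).choose (i : ℕ) : ℂ)) =
      α k ^ (k + 1) * (-1 : ℂ) ^ ((k + 1).choose 2) *
        ∏ i ∈ Finset.range (k + 1), (k.choose i : ℂ) := by
  rw [Matrix.det_eq_prod_antidiagonal_of_zero_below _ fun i j hij => by
    rw [Matrix.of_apply, hα _ (by omega), zero_mul]]
  have hdiag (i : Fin (k + 1)) : (i : ℕ) + i.rev = k := by rw [Fin.val_rev]; omega
  simp only [Matrix.of_apply, hdiag, Finset.prod_mul_distrib, Finset.prod_const, Finset.card_univ,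
    Fintype.card_fin, Fin.prod_univ_eq_prod_range (fun i => (k.choose i : ℂ))]
  ring

theorem stmt_15 (k : ℕ) (α : ℕ → ℂ) (hαk : α k ≠ 0) (hα : ∀ m, k < m → α m = 0) :
    Matrix.det (Matrix.of fun i j : Fin (k + 1) =>
        α ((i : ℕ) + (j : ℕ)) * (((i : ℕ) + (j : ℕ)).choose (i : ℕ) : ℂ)) =
      α k ^ (k + 1) * (-1 : ℂ) ^ ((k + 1).choose 2) *
        ∏ i ∈ Finset.range (k + 1), (k.choose i : ℂ) :=
  stmt_15_general k α hα
end
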